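/- If the n cities of a TSP lie on a circle in ℝ², then the Hamiltonian cycle visiting them in circular (angular) order has minimum total Euclidean length; moreover this optimal tour is a simple closed (non-self-crossing) curve. -/

import Mathlib

set_option linter.unusedSectionVars false
open Real intervalIntegral



lemma abs_cos_periodic : Function.Periodic (fun t => |Real.cos t|) (2*π) := by
  intro x; simp [Real.cos_add_two_pi]

lemma integral_abs_cos : ∫ t in (0:ℝ)..(2*π), |Real.cos t| = 4 := by
  have h := abs_cos_periodic.intervalIntegral_add_eq 0 (-(π/2))
  simp only [zero_add] at h
  rw [h]
  have h1 : IntervalIntegrable (fun t => |Real.cos t|) MeasureTheory.volume (-(π/2)) (π/2) :=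
    (Real.continuous_cos.abs).intervalIntegrable _ _
  have h2 : IntervalIntegrable (fun t => |Real.cos t|) MeasureTheory.volume (π/2) (-(π/2)+2*π) :=
    (Real.continuous_cos.abs).intervalIntegrable _ _
  rw [← intervalIntegral.integral_add_adjacent_intervals h1 h2]
  have e1 : ∫ t in (-(π/2))..(π/2), |Real.cos t| = ∫ t in (-(π/2))..(π/2), Real.cos t := by
    apply intervalIntegral.integral_congr
    intro x hx
    rw [Set.uIcc_of_le (by linarith [Real.pi_pos]) ] at hx
    exact abs_of_nonneg (Real.cos_nonneg_of_mem_Icc hx)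
  have e2 : ∫ t in (π/2)..(-(π/2)+2*π), |Real.cos t| = ∫ t in (π/2)..(-(π/2)+2*π), -Real.cos t := by
    apply intervalIntegral.integral_congr
    intro x hx
    rw [Set.uIcc_of_le (by linarith [Real.pi_pos])] at hx
    show |Real.cos x| = -Real.cos x
    rw [abs_of_nonpos]
    apply Real.cos_nonpos_of_pi_div_two_le_of_le hx.1
    · linarith [hx.2]
  rw [e1, e2]
  simp [Real.sin_pi_div_two, Real.cos_pi_div_two]
  norm_num





lemma integral_abs_cos_shift (φ : ℝ) : ∫ t in (0:ℝ)..(2*π), |Real.cos (t - φ)| = 4 := by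
  have : ∫ t in (0:ℝ)..(2*π), |Real.cos (t - φ)| = ∫ t in (0:ℝ)-φ..(2*π)-φ, |Real.cos t| := by
    rw [← intervalIntegral.integral_comp_sub_right (fun t => |Real.cos t|) φ]
  rw [this]
  have h := abs_cos_periodic.intervalIntegral_add_eq (-φ) 0
  simp only [zero_sub, zero_add] at h ⊢
  rw [show (2*π - φ) = -φ + 2*π by ring, h, integral_abs_cos]

lemma integral_abs_lin (A B : ℝ) :
    ∫ t in (0:ℝ)..(2*π), |A * Real.cos t + B * Real.sin t| = 4 * Real.sqrt (A^2 + B^2) := by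
  rcases eq_or_ne (A^2 + B^2) 0 with h0 | h0
  · have hA : A = 0 := by nlinarith [sq_nonneg A, sq_nonneg B]
    have hB : B = 0 := by nlinarith [sq_nonneg A, sq_nonneg B]
    simp [hA, hB]
  · set c := Real.sqrt (A^2+B^2) with hcdef
    have hpos : 0 < A^2 + B^2 := lt_of_le_of_ne (by positivity) (Ne.symm h0)
    have hcpos : 0 < c := Real.sqrt_pos.mpr hpos
    set z : ℂ := ⟨A, B⟩ with hz
    have hzne : z ≠ 0 := by
      intro h
      rw [Complex.ext_iff] at h
      simp only [hz, Complex.zero_re, Complex.zero_im] at h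
      exact h0 (by rw [h.1, h.2]; ring)
    have habs : ‖z‖ = c := by
      rw [Complex.norm_def, Complex.normSq_mk]
      rw [hcdef]; ring_nf
    have hcos : Real.cos z.arg = A / c := by rw [Complex.cos_arg hzne, habs]
    have hsin : Real.sin z.arg = B / c := by rw [Complex.sin_arg, habs]
    have key : ∀ t : ℝ, |A * Real.cos t + B * Real.sin t| = c * |Real.cos (t - z.arg)| := by
      intro t
      rw [Real.cos_sub, hcos, hsin]
      rw [← abs_of_pos hcpos, ← abs_mul]
      congr 1
      field_simp
      rw [abs_of_pos hcpos]
    calc ∫ t in (0:ℝ)..(2*π), |A * Real.cos t + B * Real.sin t|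
        = ∫ t in (0:ℝ)..(2*π), c * |Real.cos (t - z.arg)| := by
          apply intervalIntegral.integral_congr; intro x _; exact key x
      _ = c * ∫ t in (0:ℝ)..(2*π), |Real.cos (t - z.arg)| := intervalIntegral.integral_const_mul _ _
      _ = 4 * c := by rw [integral_abs_cos_shift]; ring

lemma dist_circle (o : EuclideanSpace ℝ (Fin 2)) (r : ℝ) (hr : 0 ≤ r)
    (x y : EuclideanSpace ℝ (Fin 2)) (a b : ℝ)
    (hx0 : x 0 = o 0 + r * Real.cos a) (hx1 : x 1 = o 1 + r * Real.sin a)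
    (hy0 : y 0 = o 0 + r * Real.cos b) (hy1 : y 1 = o 1 + r * Real.sin b) :
    dist x y = 2 * r * |Real.sin ((a - b)/2)| := by
  rw [EuclideanSpace.dist_eq]
  rw [Fin.sum_univ_two]
  have hd : Real.cos (a-b) = 2 * Real.cos ((a-b)/2)^2 - 1 := by
    rw [show a - b = 2*((a-b)/2) by ring, Real.cos_two_mul]
    ring_nf
  have h1 : Real.sin ((a-b)/2) ^ 2 = (1 - Real.cos (a-b)) / 2 := by
    nlinarith [Real.sin_sq_add_cos_sq ((a-b)/2)]
  have key : (x 0 - y 0)^2 + (x 1 - y 1)^2 = (2 * r * |Real.sin ((a-b)/2)|)^2 := by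
    rw [hx0, hx1, hy0, hy1]
    have h2 : Real.cos (a-b) = Real.cos a * Real.cos b + Real.sin a * Real.sin b :=
      Real.cos_sub a b
    have h3 : |Real.sin ((a-b)/2)|^2 = Real.sin ((a-b)/2)^2 := sq_abs _
    linear_combination r^2 * Real.sin_sq_add_cos_sq a + r^2 * Real.sin_sq_add_cos_sq b + 2*r^2*h2 - 4*r^2*h1 - 4*r^2*h3
  rw [Real.dist_eq, Real.dist_eq, sq_abs, sq_abs, key]
  exact Real.sqrt_sq (by positivity)

variable {n : ℕ} [NeZero n]

lemma zmod_sum_shift (f : ZMod n → ℝ) (a : ZMod n) :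
    ∑ i : ZMod n, f i = ∑ k ∈ Finset.range n, f (a + (k : ZMod n)) := by
  apply Finset.sum_nbij' (i := fun (i : ZMod n) => (i - a).val)
    (j := fun (k : ℕ) => a + (k : ZMod n))
  · intro i _; exact Finset.mem_range.mpr (ZMod.val_lt _)
  · intro k _; exact Finset.mem_univ _
  · intro i _; simp [ZMod.natCast_zmod_val]
  · intro k hk; simp [ZMod.val_cast_of_lt (Finset.mem_range.mp hk)]
  · intro i _; simp [ZMod.natCast_zmod_val]

lemma tv_path (x : ZMod n → ℝ) (a : ZMod n) (m : ℕ) :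
    |x (a + (m : ZMod n)) - x a| ≤
      ∑ k ∈ Finset.range m, |x (a + (k : ZMod n) + 1) - x (a + (k : ZMod n))| := by
  induction m with
  | zero => simp
  | succ m ih =>
    rw [Finset.sum_range_succ]
    have : ((m + 1 : ℕ) : ZMod n) = (m : ZMod n) + 1 := by push_cast; ring
    rw [this]
    calc |x (a + ((m : ZMod n) + 1)) - x a|
        ≤ |x (a + ((m : ZMod n) + 1)) - x (a + (m : ZMod n))| + |x (a + (m : ZMod n)) - x a| :=
          abs_sub_le _ _ _
      _ ≤ |x (a + (m : ZMod n) + 1) - x (a + (m : ZMod n))| +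
            ∑ k ∈ Finset.range m, |x (a + (k : ZMod n) + 1) - x (a + (k : ZMod n))| := by
          rw [← add_assoc]
          exact add_le_add le_rfl ih
      _ = _ := add_comm _ _

lemma tv_cycle (x : ZMod n → ℝ) (a b : ZMod n) :
    2 * |x a - x b| ≤ ∑ i : ZMod n, |x (i + 1) - x i| := by
  rw [zmod_sum_shift (fun i => |x (i + 1) - x i|) a]
  set m := (b - a).val with hm
  have hb : b = a + (m : ZMod n) := by rw [hm, ZMod.natCast_zmod_val]; ring
  have hmn : m ≤ n := le_of_lt (ZMod.val_lt _)
  rw [← Finset.sum_range_add_sum_Ico _ hmn]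
  have h1 : |x b - x a| ≤ ∑ k ∈ Finset.range m, |x (a + (k : ZMod n) + 1) - x (a + (k : ZMod n))| := by
    rw [hb]; exact tv_path x a m
  have h2 : |x a - x b| ≤ ∑ k ∈ Finset.Ico m n, |x (a + (k : ZMod n) + 1) - x (a + (k : ZMod n))| := by
    rw [Finset.sum_Ico_eq_sum_range]
    have key : ∀ k : ℕ, a + ((m + k : ℕ) : ZMod n) = b + (k : ZMod n) := by
      intro k; rw [hb]; push_cast; ring
    have h3 := tv_path x b (n - m)
    have hbn : b + ((n - m : ℕ) : ZMod n) = a := by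
      rw [hb]
      push_cast [Nat.cast_sub hmn]
      simp [ZMod.natCast_self]
    rw [hbn] at h3
    calc |x a - x b| ≤ _ := h3
      _ = _ := by
        apply Finset.sum_congr rfl
        intro k _
        rw [key k]
  rw [abs_sub_comm] at h1
  linarith

noncomputable def psi (n : ℕ) [NeZero n] (θ : ZMod n → ℝ) : ℕ → ℝ :=
  fun k => θ ((k : ZMod n)) + 2*π*(k/n : ℕ)

section Psi
variable {n : ℕ} [NeZero n] (hn : 3 ≤ n) (θ : ZMod n → ℝ)
  (hθ : ∀ i j : ZMod n, i.val < j.val → θ i < θ j)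
  (hrange : ∀ i : ZMod n, θ i ∈ Set.Ico (0 : ℝ) (2 * Real.pi))

include hn hθ hrange

lemma psi_mod_cases (k : ℕ) :
    (k % n + 1 < n ∧ (k+1) % n = k % n + 1 ∧ (k+1)/n = k/n) ∨
    (k % n + 1 = n ∧ ((k+1 : ℕ) : ZMod n) = 0 ∧ (k+1)/n = k/n + 1) := by
  have hn0 : 0 < n := by omega
  have hmod : k % n < n := Nat.mod_lt _ hn0
  have hadd : (k+1) % n = (k % n + 1) % n := by
    conv_lhs => rw [Nat.add_mod, Nat.mod_eq_of_lt (show 1 < n by omega)]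
  rcases lt_or_ge (k % n + 1) n with hA | hB
  · left
    refine ⟨hA, ?_, ?_⟩
    · rw [hadd, Nat.mod_eq_of_lt hA]
    · rw [Nat.succ_div, if_neg]
      · simp
      · intro hd
        have h0 : (k+1) % n = 0 := Nat.mod_eq_zero_of_dvd hd
        rw [hadd, Nat.mod_eq_of_lt hA] at h0
        omega
  · right
    have hBeq : k % n + 1 = n := by omega
    have hmod0 : (k+1) % n = 0 := by rw [hadd, hBeq, Nat.mod_self]
    have hdvd : n ∣ (k+1) := Nat.dvd_of_mod_eq_zero hmod0
    refine ⟨hBeq, ?_, ?_⟩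
    · exact (ZMod.natCast_eq_zero_iff ..).mpr hdvd
    · rw [Nat.succ_div, if_pos hdvd]

lemma psi_step (k : ℕ) : psi n θ k < psi n θ (k+1) := by
  unfold psi
  rcases psi_mod_cases hn θ hθ hrange k with ⟨hA, hm, hd⟩ | ⟨hB, hc, hd⟩
  · rw [hd]
    have : θ ((k : ZMod n)) < θ (((k+1 : ℕ) : ZMod n)) := by
      apply hθ
      rw [ZMod.val_natCast, ZMod.val_natCast, hm]
      omega
    linarith
  · rw [hd, hc]
    have h1 := (hrange ((k : ZMod n))).2
    have h2 := (hrange 0).1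
    push_cast
    nlinarith [Real.pi_pos]

lemma psi_mono : StrictMono (psi n θ) :=
  strictMono_nat_of_lt_succ (psi_step hn θ hθ hrange)

lemma psi_add_n (k : ℕ) : psi n θ (k + n) = psi n θ k + 2*π := by
  unfold psi
  have h1 : ((k + n : ℕ) : ZMod n) = (k : ZMod n) := by push_cast; simp
  have h2 : (k + n)/n = k/n + 1 := by
    rw [Nat.add_div_right _ (by omega)]
  rw [h1, h2]
  push_cast
  ring

lemma psi_gap_lt (k : ℕ) : psi n θ (k+1) - psi n θ k < 2*π := by
  unfold psi
  rcases psi_mod_cases hn θ hθ hrange k with ⟨hA, hm, hd⟩ | ⟨hB, hc, hd⟩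
  · rw [hd]
    have h1 := (hrange (((k+1:ℕ) : ZMod n))).2
    have h2 := (hrange ((k : ZMod n))).1
    linarith
  · rw [hd, hc]
    have h2 : θ 0 < θ ((k : ZMod n)) := by
      apply hθ
      rw [ZMod.val_natCast]
      have : (0 : ZMod n).val = 0 := ZMod.val_zero
      omega
    push_cast
    nlinarith [Real.pi_pos]

end Psi

lemma cos_le_cos_aux {a b : ℝ} (h1 : |b| ≤ a) (h2 : a ≤ 2*π - |b|) :
    Real.cos a ≤ Real.cos b := by
  rw [← Real.cos_abs b]
  have hbpi : |b| ≤ π := by nlinarith [abs_nonneg b]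
  rcases le_or_gt a π with ha | ha
  · exact Real.cos_le_cos_of_nonneg_of_le_pi (abs_nonneg b) ha h1
  · rw [← Real.cos_two_pi_sub]
    apply Real.cos_le_cos_of_nonneg_of_le_pi (abs_nonneg b) (by linarith) (by linarith)

lemma cos_lt_cos_aux {a b : ℝ} (hb : 0 ≤ b) (h1 : b < a) (h2 : a < 2*π - b) :
    Real.cos a < Real.cos b := by
  have hbpi : b ≤ π := by nlinarith
  rcases le_or_gt a π with ha | ha
  · exact Real.cos_lt_cos_of_nonneg_of_le_pi hb ha h1
  · rw [← Real.cos_two_pi_sub]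
    apply Real.cos_lt_cos_of_nonneg_of_le_pi hb (by linarith) (by linarith)

lemma cos_le_cos_aux' {a b : ℝ} (h1 : -a ≤ b) (h2 : b ≤ a) (h3 : a + b ≤ 2*π)
    (h4 : a - b ≤ 2*π) : Real.cos a ≤ Real.cos b := by
  apply cos_le_cos_aux (abs_le.mpr ⟨h1, h2⟩)
  rcases abs_cases b with ⟨h, _⟩ | ⟨h, _⟩ <;> rw [h] <;> linarith

section Psi2
variable {n : ℕ} [NeZero n] (hn : 3 ≤ n) (θ : ZMod n → ℝ)
  (hθ : ∀ i j : ZMod n, i.val < j.val → θ i < θ j)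
  (hrange : ∀ i : ZMod n, θ i ∈ Set.Ico (0 : ℝ) (2 * Real.pi))

noncomputable def mu (n : ℕ) [NeZero n] (θ : ZMod n → ℝ) : ℕ → ℝ :=
  fun k => (psi n θ k + psi n θ (k+1))/2

include hn hθ hrange

lemma psi_diff_le (j1 j2 : ℕ) (h : j2 ≤ j1 + n) : psi n θ j2 - psi n θ j1 ≤ 2*π := by
  have h1 : psi n θ j2 ≤ psi n θ (j1 + n) := (psi_mono hn θ hθ hrange).monotone h
  have h2 := psi_add_n hn θ hθ hrange j1
  linarith

lemma key_max (k : ℕ) (hk : k < n) (t : ℝ)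
    (ht1 : mu n θ k ≤ t) (ht2 : t ≤ mu n θ (k+1))
    (j : ℕ) (hj1 : 1 ≤ j) (hj2 : j ≤ n) :
    Real.cos (t - psi n θ j) ≤ Real.cos (t - psi n θ (k+1)) := by
  have mono := (psi_mono hn θ hθ hrange).monotone
  unfold mu at ht1 ht2
  rcases lt_trichotomy j (k+1) with hj | hj | hj
  · -- j ≤ k
    have hjk : j ≤ k := by omega
    have m1 : psi n θ j ≤ psi n θ k := mono hjk
    have m2 : psi n θ j ≤ psi n θ (k+1) := mono (by omega)
    have u1 : psi n θ (k+2) - psi n θ j ≤ 2*π := psi_diff_le hn θ hθ hrange j (k+2) (by omega)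
    have u2 : psi n θ (k+1) - psi n θ j ≤ 2*π := psi_diff_le hn θ hθ hrange j (k+1) (by omega)
    exact cos_le_cos_aux' (by linarith) (by linarith) (by linarith) (by linarith)
  · rw [hj]
  · -- j ≥ k+2
    have hjk : k + 2 ≤ j := by omega
    have m1 : psi n θ (k+2) ≤ psi n θ j := mono hjk
    have m2 : psi n θ (k+1) ≤ psi n θ j := mono (by omega)
    have u1 : psi n θ j - psi n θ (k+1) ≤ 2*π := psi_diff_le hn θ hθ hrange (k+1) j (by omega)
    have u2 : psi n θ j - psi n θ k ≤ 2*π := psi_diff_le hn θ hθ hrange k j (by omega)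
    rw [show t - psi n θ j = -(psi n θ j - t) by ring, Real.cos_neg]
    exact cos_le_cos_aux' (by linarith) (by linarith) (by linarith) (by linarith)

end Psi2

noncomputable def CC (n : ℕ) [NeZero n] (θ : ZMod n → ℝ) : ℝ → ℝ :=
  fun t => Finset.univ.sup' Finset.univ_nonempty (fun i : ZMod n => Real.cos (t - θ i))

section C3
variable {n : ℕ} [NeZero n] (hn : 3 ≤ n) (θ : ZMod n → ℝ)
  (hθ : ∀ i j : ZMod n, i.val < j.val → θ i < θ j)
  (hrange : ∀ i : ZMod n, θ i ∈ Set.Ico (0 : ℝ) (2 * Real.pi))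

lemma CC_cont : Continuous (CC n θ) :=
  Continuous.finset_sup'_apply _ (fun i _ => by fun_prop)

lemma CC_periodic : Function.Periodic (CC n θ) (2*π) := by
  intro t
  unfold CC
  apply Finset.sup'_congr _ rfl
  intro i _
  rw [show t + 2*π - θ i = t - θ i + 2*π by ring, Real.cos_add_two_pi]

lemma CC_ge (t : ℝ) (i : ZMod n) : Real.cos (t - θ i) ≤ CC n θ t :=
  Finset.le_sup' (fun i : ZMod n => Real.cos (t - θ i)) (Finset.mem_univ i)

lemma CC_exists (t : ℝ) : ∃ i : ZMod n, CC n θ t = Real.cos (t - θ i) := by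
  obtain ⟨i, _, h⟩ := Finset.exists_mem_eq_sup' (Finset.univ_nonempty)
    (fun i : ZMod n => Real.cos (t - θ i))
  exact ⟨i, h⟩

lemma theta_eq_psi (i : ZMod n) : θ i = psi n θ i.val := by
  unfold psi
  rw [ZMod.natCast_zmod_val, Nat.div_eq_of_lt (ZMod.val_lt i)]
  simp

lemma psi_n_eq : psi n θ n = θ 0 + 2*π := by
  unfold psi
  rw [Nat.div_self (Nat.pos_of_ne_zero (NeZero.ne n))]
  simp [ZMod.natCast_self]

include hn hθ hrange

lemma CC_cell (k : ℕ) (hk : k < n) (t : ℝ)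
    (ht1 : mu n θ k ≤ t) (ht2 : t ≤ mu n θ (k+1)) :
    CC n θ t = Real.cos (t - psi n θ (k+1)) := by
  apply le_antisymm
  · apply Finset.sup'_le
    intro i _
    rcases eq_or_ne i.val 0 with h0 | h0
    · have hi : i = 0 := by rwa [← ZMod.val_eq_zero]
      rw [hi]
      have : Real.cos (t - θ 0) = Real.cos (t - psi n θ n) := by
        rw [psi_n_eq]
        rw [show t - (θ 0 + 2*π) = t - θ 0 - 2*π by ring, Real.cos_sub_two_pi]
      rw [this]
      exact key_max hn θ hθ hrange k hk t ht1 ht2 n (by omega) le_rfl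
    · rw [theta_eq_psi θ i]
      exact key_max hn θ hθ hrange k hk t ht1 ht2 i.val (by omega) (le_of_lt (ZMod.val_lt i))
  · rcases lt_or_ge (k+1) n with h | h
    · have : psi n θ (k+1) = θ ((k+1 : ℕ) : ZMod n) := by
        unfold psi
        rw [Nat.div_eq_of_lt h]
        simp
      rw [this]
      exact CC_ge θ t _
    · have hkn : k + 1 = n := by omega
      rw [hkn, psi_n_eq, show t - (θ 0 + 2*π) = t - θ 0 - 2*π by ring, Real.cos_sub_two_pi]
      exact CC_ge θ t 0

end C3

section C4
variable {n : ℕ} [NeZero n] (hn : 3 ≤ n) (θ : ZMod n → ℝ)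
  (hθ : ∀ i j : ZMod n, i.val < j.val → θ i < θ j)
  (hrange : ∀ i : ZMod n, θ i ∈ Set.Ico (0 : ℝ) (2 * Real.pi))

lemma CC_integrable (a b : ℝ) :
    IntervalIntegrable (CC n θ) MeasureTheory.volume a b :=
  (CC_cont θ).intervalIntegrable _ _

include hn hθ hrange

lemma mu_mono (k : ℕ) : mu n θ k ≤ mu n θ (k+1) := by
  have h1 := psi_step hn θ hθ hrange k
  have h2 := psi_step hn θ hθ hrange (k+1)
  unfold mu
  linarith

lemma CC_cell_integral (k : ℕ) (hk : k < n) :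
    ∫ t in (mu n θ k)..(mu n θ (k+1)), CC n θ t
      = Real.sin ((psi n θ (k+2) - psi n θ (k+1))/2)
        + Real.sin ((psi n θ (k+1) - psi n θ k)/2) := by
  have hmu : mu n θ k ≤ mu n θ (k+1) := mu_mono hn θ hθ hrange k
  have hcongr : ∫ t in (mu n θ k)..(mu n θ (k+1)), CC n θ t
      = ∫ t in (mu n θ k)..(mu n θ (k+1)), Real.cos (t - psi n θ (k+1)) := by
    apply intervalIntegral.integral_congr
    intro t ht
    rw [Set.uIcc_of_le hmu] at ht
    exact CC_cell hn θ hθ hrange k hk t ht.1 ht.2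
  rw [hcongr]
  rw [intervalIntegral.integral_comp_sub_right (fun s => Real.cos s) (psi n θ (k+1))]
  rw [integral_cos]
  rw [show mu n θ (k+1) - psi n θ (k+1) = (psi n θ (k+2) - psi n θ (k+1))/2 by
        unfold mu; ring,
      show mu n θ k - psi n θ (k+1) = -((psi n θ (k+1) - psi n θ k)/2) by
        unfold mu; ring,
      Real.sin_neg]
  ring

lemma CC_period_integral :
    ∫ t in (0:ℝ)..(2*π), CC n θ t
      = ∑ k ∈ Finset.range n, 2 * Real.sin ((psi n θ (k+1) - psi n θ k)/2) := by
  have hadj := intervalIntegral.sum_integral_adjacent_intervals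
    (a := mu n θ) (n := n) (fun k _ => CC_integrable θ _ _)
  have e1 : psi n θ (n+1) = psi n θ 1 + 2*π := by
    have h := psi_add_n hn θ hθ hrange 1
    rwa [Nat.add_comm 1 n] at h
  have e0 : psi n θ n = psi n θ 0 + 2*π := by
    have h := psi_add_n hn θ hθ hrange 0
    rwa [Nat.zero_add] at h
  have hmun : mu n θ n = mu n θ 0 + 2*π := by
    unfold mu
    rw [e1, e0]
    ring
  have hper : ∫ t in (0:ℝ)..(2*π), CC n θ t
      = ∫ t in (mu n θ 0)..(mu n θ n), CC n θ t := by
    rw [hmun]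
    have := (CC_periodic θ).intervalIntegral_add_eq 0 (mu n θ 0)
    simpa using this
  rw [hper, ← hadj]
  have hcells : ∀ k ∈ Finset.range n,
      ∫ t in (mu n θ k)..(mu n θ (k+1)), CC n θ t
        = Real.sin ((psi n θ (k+2) - psi n θ (k+1))/2)
          + Real.sin ((psi n θ (k+1) - psi n θ k)/2) :=
    fun k hk => CC_cell_integral hn θ hθ hrange k (Finset.mem_range.mp hk)
  rw [Finset.sum_congr rfl hcells]
  set f : ℕ → ℝ := fun k => Real.sin ((psi n θ (k+1) - psi n θ k)/2) with hf
  have hshift : ∑ k ∈ Finset.range n, f (k+1) = ∑ k ∈ Finset.range n, f k := by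
    have h1 := Finset.sum_range_succ' f n
    have h2 := Finset.sum_range_succ f n
    have hfn : f n = f 0 := by
      simp only [hf]
      rw [e1, e0]
      ring_nf
    rw [h2, hfn] at h1
    linarith
  have : ∀ k ∈ Finset.range n, Real.sin ((psi n θ (k+2) - psi n θ (k+1))/2)
          + Real.sin ((psi n θ (k+1) - psi n θ k)/2) = f (k+1) + f k := fun k _ => rfl
  rw [Finset.sum_congr rfl this, Finset.sum_add_distrib, hshift]
  rw [← Finset.sum_add_distrib]
  apply Finset.sum_congr rfl
  intro k _
  ring

end C4

section Main1
variable {n : ℕ} [NeZero n] (hn : 3 ≤ n)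
  (o : EuclideanSpace ℝ (Fin 2)) (r : ℝ) (hr : 0 < r)
  (θ : ZMod n → ℝ)
  (hθ : ∀ i j : ZMod n, i.val < j.val → θ i < θ j)
  (hrange : ∀ i : ZMod n, θ i ∈ Set.Ico (0 : ℝ) (2 * Real.pi))
  (p : ZMod n → EuclideanSpace ℝ (Fin 2))
  (hp : ∀ i : ZMod n,
      p i 0 = o 0 + r * Real.cos (θ i) ∧ p i 1 = o 1 + r * Real.sin (θ i))

include hn hr hθ hrange hp

lemma perim_eq :
    ∑ i : ZMod n, dist (p i) (p (i + 1))
      = r * ∑ k ∈ Finset.range n, 2 * Real.sin ((psi n θ (k+1) - psi n θ k)/2) := by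
  rw [zmod_sum_shift (fun i => dist (p i) (p (i + 1))) 0]
  rw [Finset.mul_sum]
  apply Finset.sum_congr rfl
  intro k hk
  have hkn := Finset.mem_range.mp hk
  simp only [zero_add]
  have hgpos : 0 < psi n θ (k+1) - psi n θ k := by linarith [psi_step hn θ hθ hrange k]
  have hglt : psi n θ (k+1) - psi n θ k < 2*π := psi_gap_lt hn θ hθ hrange k
  have hsinpos : 0 < Real.sin ((psi n θ (k+1) - psi n θ k)/2) := by
    apply Real.sin_pos_of_pos_of_lt_pi <;> linarith
  have hkval : θ ((k : ZMod n)) = psi n θ k := by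
    unfold psi
    rw [Nat.div_eq_of_lt hkn]
    simp
  have hdist := dist_circle o r (le_of_lt hr) (p ((k : ZMod n))) (p ((k : ZMod n) + 1))
    (θ ((k : ZMod n))) (θ ((k : ZMod n) + 1))
    (hp _).1 (hp _).2 (hp _).1 (hp _).2
  rw [hdist]
  rcases lt_or_ge (k+1) n with hA | hB
  · have hcast : ((k : ZMod n)) + 1 = ((k+1 : ℕ) : ZMod n) := by push_cast; ring
    have hv : θ (((k+1 : ℕ) : ZMod n)) = psi n θ (k+1) := by
      unfold psi
      rw [Nat.div_eq_of_lt hA]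
      simp
    rw [hcast, hv, hkval]
    rw [show (psi n θ k - psi n θ (k+1))/2 = -((psi n θ (k+1) - psi n θ k)/2) by ring]
    rw [Real.sin_neg, abs_neg, abs_of_pos hsinpos]
    ring
  · have hkn1 : k + 1 = n := by omega
    have hcast : ((k : ZMod n)) + 1 = 0 := by
      have : ((k+1 : ℕ) : ZMod n) = 0 := by
        rw [hkn1]; exact ZMod.natCast_self n
      rw [← this]; push_cast; ring
    have hv : θ (0 : ZMod n) = psi n θ (k+1) - 2*π := by
      rw [hkn1, psi_n_eq]; ring
    rw [hcast, hv, hkval]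
    rw [show (psi n θ k - (psi n θ (k+1) - 2*π))/2
          = π - (psi n θ (k+1) - psi n θ k)/2 by ring]
    rw [Real.sin_pi_sub, abs_of_pos hsinpos]
    ring

lemma tour_lower_bound (e : Equiv.Perm (ZMod n)) :
    (∑ i : ZMod n, dist (p i) (p (i + 1))) ≤
      ∑ i : ZMod n, dist (p (e i)) (p (e (i + 1))) := by
  classical
  set X : ZMod n → ℝ → ℝ := fun i t => p i 0 * Real.cos t + p i 1 * Real.sin t with hX
  have hXcont : ∀ i : ZMod n, Continuous (X i) := by
    intro i; simp only [hX]; fun_prop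
  -- X decomposition
  have hXval : ∀ (i : ZMod n) (t : ℝ),
      X i t = o 0 * Real.cos t + o 1 * Real.sin t + r * Real.cos (t - θ i) := by
    intro i t
    simp only [hX, (hp i).1, (hp i).2, Real.cos_sub]
    ring
  -- edge integral
  have edge_int : ∀ i j : ZMod n,
      ∫ t in (0:ℝ)..(2*π), |X j t - X i t| = 4 * dist (p i) (p j) := by
    intro i j
    have : ∀ t : ℝ, X j t - X i t
        = (p j 0 - p i 0) * Real.cos t + (p j 1 - p i 1) * Real.sin t := by
      intro t; simp only [hX]; ring
    calc ∫ t in (0:ℝ)..(2*π), |X j t - X i t|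
        = ∫ t in (0:ℝ)..(2*π), |(p j 0 - p i 0) * Real.cos t + (p j 1 - p i 1) * Real.sin t| := by
          apply intervalIntegral.integral_congr; intro t _
          show |X j t - X i t| = _
          rw [this t]
      _ = 4 * Real.sqrt ((p j 0 - p i 0)^2 + (p j 1 - p i 1)^2) := integral_abs_lin _ _
      _ = 4 * dist (p i) (p j) := by
          rw [dist_comm, EuclideanSpace.dist_eq, Fin.sum_univ_two]
          rw [Real.dist_eq, Real.dist_eq, sq_abs, sq_abs]
  -- pointwise lower bound
  have pointwise : ∀ t : ℝ, 2*r*(CC n θ t + CC n θ (t+π))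
      ≤ ∑ i : ZMod n, |X (e (i+1)) t - X (e i) t| := by
    intro t
    obtain ⟨j, hj⟩ := CC_exists θ t
    obtain ⟨j', hj'⟩ := CC_exists θ (t+π)
    have hdiff : X j t - X j' t = r * (CC n θ t + CC n θ (t+π)) := by
      rw [hXval j t, hXval j' t, hj, hj']
      have : Real.cos (t - θ j') = -Real.cos (t + π - θ j') := by
        rw [show t + π - θ j' = (t - θ j') + π by ring, Real.cos_add_pi, neg_neg]
      rw [this]
      ring
    have htv := tv_cycle (fun i => X (e i) t) (e.symm j) (e.symm j')
    simp only [Equiv.apply_symm_apply] at htv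
    calc 2*r*(CC n θ t + CC n θ (t+π)) = 2*(X j t - X j' t) := by rw [hdiff]; ring
      _ ≤ 2*|X j t - X j' t| := by
          have := le_abs_self (X j t - X j' t); linarith
      _ ≤ _ := htv
  -- integrate
  have hInt1 : IntervalIntegrable (fun t => 2*r*(CC n θ t + CC n θ (t+π)))
      MeasureTheory.volume 0 (2*π) := by
    apply Continuous.intervalIntegrable
    have h1 := CC_cont (n := n) θ
    fun_prop
  have hInt2 : IntervalIntegrable (fun t => ∑ i : ZMod n, |X (e (i+1)) t - X (e i) t|)
      MeasureTheory.volume 0 (2*π) := by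
    apply Continuous.intervalIntegrable
    apply continuous_finset_sum
    intro i _
    exact ((hXcont (e (i+1))).sub (hXcont (e i))).abs
  have hmono := intervalIntegral.integral_mono_on (by positivity : (0:ℝ) ≤ 2*π)
    hInt1 hInt2 (fun t _ => pointwise t)
  -- LHS integral value
  have hL : ∫ t in (0:ℝ)..(2*π), 2*r*(CC n θ t + CC n θ (t+π))
      = 4*r*∫ t in (0:ℝ)..(2*π), CC n θ t := by
    have hInt3 : IntervalIntegrable (fun t => CC n θ (t+π)) MeasureTheory.volume 0 (2*π) := by
      apply Continuous.intervalIntegrable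
      exact (CC_cont θ).comp (continuous_id.add continuous_const)
    have hsplit : ∫ t in (0:ℝ)..(2*π), 2*r*(CC n θ t + CC n θ (t+π))
        = 2*r*((∫ t in (0:ℝ)..(2*π), CC n θ t) + ∫ t in (0:ℝ)..(2*π), CC n θ (t+π)) := by
      rw [intervalIntegral.integral_const_mul, intervalIntegral.integral_add (CC_integrable θ 0 (2*π)) hInt3]
    have hshiftint : ∫ t in (0:ℝ)..(2*π), CC n θ (t+π) = ∫ t in (0:ℝ)..(2*π), CC n θ t := by
      rw [intervalIntegral.integral_comp_add_right (CC n θ) π]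
      have hper := (CC_periodic θ).intervalIntegral_add_eq π 0
      simpa [zero_add, show (0:ℝ) + π = π by ring, show (2*π + π : ℝ) = π + 2*π by ring] using hper
    rw [hsplit, hshiftint]
    ring
  -- RHS integral value
  have hR : ∫ t in (0:ℝ)..(2*π), (∑ i : ZMod n, |X (e (i+1)) t - X (e i) t|)
      = 4 * ∑ i : ZMod n, dist (p (e i)) (p (e (i+1))) := by
    rw [intervalIntegral.integral_finset_sum]
    · rw [Finset.mul_sum]
      apply Finset.sum_congr rfl
      intro i _
      exact edge_int (e i) (e (i+1))
    · intro i _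
      exact (((hXcont (e (i+1))).sub (hXcont (e i))).abs).intervalIntegrable _ _
  rw [hL, hR] at hmono
  have hperim := perim_eq hn o r hr θ hθ hrange p hp
  rw [CC_period_integral hn θ hθ hrange] at hL
  have : 4 * (∑ i : ZMod n, dist (p i) (p (i + 1)))
      = 4*r*∑ k ∈ Finset.range n, 2 * Real.sin ((psi n θ (k+1) - psi n θ k)/2) := by
    rw [hperim]; ring
  rw [CC_period_integral hn θ hθ hrange] at hmono
  linarith

end Main1

section Main2
variable {n : ℕ} [NeZero n] (hn : 3 ≤ n)
  (o : EuclideanSpace ℝ (Fin 2)) (r : ℝ) (hr : 0 < r)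
  (θ : ZMod n → ℝ)
  (hθ : ∀ i j : ZMod n, i.val < j.val → θ i < θ j)
  (hrange : ∀ i : ZMod n, θ i ∈ Set.Ico (0 : ℝ) (2 * Real.pi))
  (p : ZMod n → EuclideanSpace ℝ (Fin 2))
  (hp : ∀ i : ZMod n,
      p i 0 = o 0 + r * Real.cos (θ i) ∧ p i 1 = o 1 + r * Real.sin (θ i))

include hn hr hθ hrange hp

lemma no_cross (i j : ZMod n) (hij : i ≠ j) (P : EuclideanSpace ℝ (Fin 2))
    (hPi : P ∈ openSegment ℝ (p i) (p (i+1))) :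
    P ∉ openSegment ℝ (p j) (p (j+1)) := by
  intro hPj
  have hn0 : 0 < n := by omega
  have h1ne : (1 : ZMod n) ≠ 0 := by
    intro h
    have h2 : ((1 : ℕ) : ZMod n) = 0 := by push_cast; exact h
    have := congrArg ZMod.val h2
    rw [ZMod.val_natCast, Nat.mod_eq_of_lt (by omega), ZMod.val_zero] at this
    omega
  have h2ne : (2 : ZMod n) ≠ 0 := by
    intro h
    have h2 : ((2 : ℕ) : ZMod n) = 0 := by push_cast; exact h
    have := congrArg ZMod.val h2
    rw [ZMod.val_natCast, Nat.mod_eq_of_lt (by omega), ZMod.val_zero] at this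
    omega
  have hvalinj : Function.Injective (ZMod.val (n := n)) := ZMod.val_injective n
  -- set up chord functional
  set α : ℝ := θ i with hα
  set β : ℝ := if i.val + 1 = n then θ (i+1) + 2*π else θ (i+1) with hβ
  set m : ℝ := (α + β)/2 with hm
  set hh : ℝ := (β - α)/2 with hhh
  set L : EuclideanSpace ℝ (Fin 2) → ℝ :=
    fun x => Real.cos m * (x 0 - o 0) + Real.sin m * (x 1 - o 1) - r * Real.cos hh with hL
  -- value on circle points
  have hLval : ∀ k : ZMod n, L (p k) = r * (Real.cos (θ k - m) - Real.cos hh) := by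
    intro k
    simp only [hL, (hp k).1, (hp k).2]
    rw [Real.cos_sub]
    ring
  -- val of i+1
  have hival : i.val < n := ZMod.val_lt i
  have hi1val : (i+1).val = if i.val + 1 = n then 0 else i.val + 1 := by
    have : i + 1 = ((i.val + 1 : ℕ) : ZMod n) := by
      push_cast [ZMod.natCast_zmod_val]
      rfl
    rw [this, ZMod.val_natCast]
    rcases eq_or_ne (i.val + 1) n with h | h
    · rw [if_pos h, h, Nat.mod_self]
    · rw [if_neg h, Nat.mod_eq_of_lt (by omega)]
  -- h bounds
  have hθi1 : ∀ c : ZMod n, 0 ≤ θ c ∧ θ c < 2*π := fun c => ⟨(hrange c).1, (hrange c).2⟩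
  have hhpos : 0 < hh := by
    rw [hhh, hβ, hα]
    rcases eq_or_ne (i.val + 1) n with h | h
    · rw [if_pos h]
      have h1 := (hθi1 i).2
      have h2 := (hθi1 (i+1)).1
      linarith
    · rw [if_neg h]
      have : θ i < θ (i+1) := by
        apply hθ
        rw [hi1val, if_neg h]
        omega
      linarith
  have hhlt : hh < π := by
    rw [hhh, hβ, hα]
    rcases eq_or_ne (i.val + 1) n with h | h
    · rw [if_pos h]
      have h0i : θ 0 < θ i := by
        apply hθ
        rw [ZMod.val_zero]
        omega
      have hi10 : i + 1 = 0 := by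
        have : (i+1).val = 0 := by rw [hi1val, if_pos h]
        exact hvalinj (by rw [this, ZMod.val_zero])
      rw [hi10]
      linarith
    · rw [if_neg h]
      have := (hθi1 (i+1)).2
      have := (hθi1 i).1
      linarith
  -- endpoints
  have hLi : L (p i) = 0 := by
    rw [hLval i]
    rw [show θ i - m = -hh by rw [hm, hhh, hα]; ring, Real.cos_neg]
    ring
  have hLi1 : L (p (i+1)) = 0 := by
    rw [hLval (i+1)]
    rcases eq_or_ne (i.val + 1) n with h | h
    · have hβval : β = θ (i+1) + 2*π := by rw [hβ, if_pos h]
      rw [show θ (i+1) - m = hh - 2*π by rw [hm, hhh, hβval]; ring, Real.cos_sub_two_pi]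
      ring
    · have hβval : β = θ (i+1) := by rw [hβ, if_neg h]
      rw [show θ (i+1) - m = hh by rw [hm, hhh, hβval]; ring]
      ring
  -- other points strictly negative
  have hLk : ∀ k : ZMod n, k ≠ i → k ≠ i + 1 → L (p k) < 0 := by
    intro k hki hki1
    rw [hLval k]
    have key : Real.cos (θ k - m) < Real.cos hh := by
      rcases eq_or_ne (i.val + 1) n with h | h
      · -- wrap case : i+1 = 0, β = θ 0 + 2π
        have hi10 : i + 1 = 0 := by
          have : (i+1).val = 0 := by rw [hi1val, if_pos h]
          exact hvalinj (by rw [this, ZMod.val_zero])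
        have hk0 : k ≠ 0 := by rw [← hi10]; exact hki1
        have hkv0 : 0 < k.val := by
          rcases Nat.eq_zero_or_pos k.val with h0 | h0
          · exact absurd (hvalinj (by rw [h0, ZMod.val_zero])) hk0
          · exact h0
        have hkvi : k.val < i.val := by
          have h1 : k.val < n := ZMod.val_lt k
          have h2 : k.val ≠ i.val := fun hc => hki (hvalinj hc)
          omega
        have hθ0k : θ 0 < θ k := hθ 0 k (by rw [ZMod.val_zero]; omega)
        have hθki : θ k < θ i := hθ k i hkvi
        have hβval : β = θ 0 + 2*π := by rw [hβ, if_pos h, hi10]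
        have hcos : Real.cos (θ k - m) = Real.cos (θ k + 2*π - m) := by
          rw [show θ k + 2*π - m = (θ k - m) + 2*π by ring, Real.cos_add_two_pi]
        rw [hcos]
        apply cos_lt_cos_aux (le_of_lt hhpos)
        · rw [hhh, hm]
          rw [hβval] at *
          linarith
        · rw [hhh, hm]
          rw [hβval] at *
          rw [hα] at *
          linarith
      · -- non-wrap
        have hβval : β = θ (i+1) := by rw [hβ, if_neg h]
        have hi1v : (i+1).val = i.val + 1 := by rw [hi1val, if_neg h]
        rcases lt_trichotomy k.val i.val with hlt | heq | hgt
        · have hθk : θ k < θ i := hθ k i hlt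
          have hcos : Real.cos (θ k - m) = Real.cos (m - θ k) := by
            rw [show θ k - m = -(m - θ k) by ring, Real.cos_neg]
          rw [hcos]
          apply cos_lt_cos_aux (le_of_lt hhpos)
          · rw [hhh, hm, hα]
            linarith
          · rw [hhh, hm]
            have h1 := (hθi1 k).1
            have h2 : β < 2*π := by rw [hβval]; exact (hθi1 (i+1)).2
            rw [hα] at *
            linarith
        · exact absurd (hvalinj heq) hki
        · have hkne : k.val ≠ i.val + 1 := by
            intro hc
            exact hki1 (hvalinj (by rw [hc, hi1v]))
          have hθk : θ (i+1) < θ k := by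
            apply hθ
            rw [hi1v]
            omega
          apply cos_lt_cos_aux (le_of_lt hhpos)
          · rw [hhh, hm, hβval]
            linarith
          · rw [hhh, hm, hα]
            have h1 := (hθi1 k).2
            have h2 := (hθi1 i).1
            linarith
    nlinarith
  -- affine property
  have hLaff : ∀ (a b : ℝ) (x y : EuclideanSpace ℝ (Fin 2)), a + b = 1 →
      L (a • x + b • y) = a * L x + b * L y := by
    intro a b x y hab
    simp only [hL, PiLp.add_apply, PiLp.smul_apply, smul_eq_mul]
    linear_combination (Real.cos m * o 0 + Real.sin m * o 1 + r * Real.cos hh) * hab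
  -- L P = 0 from edge i
  obtain ⟨a, b, ha, hb, hab, hP⟩ := hPi
  have hLP : L P = 0 := by
    rw [← hP, hLaff a b _ _ hab, hLi, hLi1]
    ring
  -- L P < 0 from edge j
  obtain ⟨a', b', ha', hb', hab', hP'⟩ := hPj
  have hLP' : L P < 0 := by
    rw [← hP', hLaff a' b' _ _ hab']
    rcases eq_or_ne j (i+1) with hj1 | hj1
    · -- shares vertex i+1 : L (p j) = 0, L (p (j+1)) < 0
      have hLj : L (p j) = 0 := by rw [hj1]; exact hLi1
      have hLj1 : L (p (j+1)) < 0 := by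
        apply hLk
        · rw [hj1]
          intro hc
          have h2 : i + 2 = i + 0 := by
            rw [add_zero, show i + (2 : ZMod n) = i + 1 + 1 by ring, hc]
          exact h2ne (add_left_cancel h2)
        · rw [hj1]
          intro hc
          have h2 : i + 1 + 1 = i + 1 + 0 := by rw [add_zero, hc]
          exact h1ne (add_left_cancel h2)
      nlinarith
    · rcases eq_or_ne (j+1) i with hj2 | hj2
      · have hLj1 : L (p (j+1)) = 0 := by rw [hj2]; exact hLi
        have hLj : L (p j) < 0 := by
          apply hLk
          · intro hc
            rw [hc] at hj2
            have h2 : i + 1 = i + 0 := by rw [add_zero, hj2]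
            exact h1ne (add_left_cancel h2)
          · intro hc
            rw [hc] at hj2
            have h2 : i + 2 = i + 0 := by
              rw [add_zero, show i + (2 : ZMod n) = i + 1 + 1 by ring, hj2]
            exact h2ne (add_left_cancel h2)
        nlinarith
      · have hLj : L (p j) < 0 := hLk j (Ne.symm hij) hj1
        have hLj1 : L (p (j+1)) < 0 := by
          apply hLk
          · exact hj2
          · intro hc
            exact hij (add_right_cancel hc).symm
        nlinarith
  linarith

end Main2

/-- If the `n` cities of a TSP lie on a circle in the plane and are indexed in
circular (angular) order, then the tour visiting them in that cyclic order has
minimum total Euclidean length among all tours, and it is simple: no two of its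
edges meet at a point interior to both. -/
theorem circle_tour_optimal_and_simple (n : ℕ) [NeZero n] (hn : 3 ≤ n)
    (o : EuclideanSpace ℝ (Fin 2)) (r : ℝ) (hr : 0 < r)
    (θ : ZMod n → ℝ)
    (hθ : ∀ i j : ZMod n, i.val < j.val → θ i < θ j)
    (hrange : ∀ i : ZMod n, θ i ∈ Set.Ico (0 : ℝ) (2 * Real.pi))
    (p : ZMod n → EuclideanSpace ℝ (Fin 2))
    (hp : ∀ i : ZMod n,
      p i 0 = o 0 + r * Real.cos (θ i) ∧ p i 1 = o 1 + r * Real.sin (θ i)) :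
    (∀ e : Equiv.Perm (ZMod n),
        (∑ i : ZMod n, dist (p i) (p (i + 1))) ≤
          ∑ i : ZMod n, dist (p (e i)) (p (e (i + 1)))) ∧
    (∀ i j : ZMod n, i ≠ j → ∀ P : EuclideanSpace ℝ (Fin 2),
        P ∈ openSegment ℝ (p i) (p (i + 1)) → P ∉ openSegment ℝ (p j) (p (j + 1))) := by
  constructor
  · intro e
    exact tour_lower_bound hn o r hr θ hθ hrange p hp e
  · intro i j hij P hPi
    exact no_cross hn o r hr θ hθ hrange p hp i j hij P hPi
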